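/- Let C₁, C₂ : S → ℝ be functions with values in [−1,1] on a surface S, and let K₁, K₂ ≤ 0 be real numbers. If at a point one has K + K⊥ ≤ C₁M₁ and K − K⊥ ≤ C₂M₂, where M₁ = ((C₁−C₂)/2)K₁ + ((C₁+C₂)/2)K₂ and M₂ = −((C₁−C₂)/2)K₁ + ((C₁+C₂)/2)K₂, then 2K ≤ ((C₁−C₂)²/2)K₁ + ((C₁+C₂)²/2)K₂ ≤ 0; in particular K ≤ 0. -/

import Mathlib

/-! Adding the two hypotheses cancels `K⊥`, and `C₁ M₁ + C₂ M₂` collapses to the quadratic form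
`(C₁ - C₂)² K₁ / 2 + (C₁ + C₂)² K₂ / 2`, which is nonpositive because `K₁, K₂ ≤ 0`. -/

section

variable {R : Type*} [Field R] [LinearOrder R] [IsStrictOrderedRing R]

theorem mul_add_mul_eq_sq_div_two_mul_add_sq_div_two_mul (c₁ c₂ K₁ K₂ : R) :
    c₁ * ((c₁ - c₂) / 2 * K₁ + (c₁ + c₂) / 2 * K₂) +
        c₂ * (-((c₁ - c₂) / 2) * K₁ + (c₁ + c₂) / 2 * K₂) =
      (c₁ - c₂) ^ 2 / 2 * K₁ + (c₁ + c₂) ^ 2 / 2 * K₂ := by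
  ring

theorem sq_div_two_mul_add_sq_div_two_mul_nonpos (x y : R) {K₁ K₂ : R}
    (hK₁ : K₁ ≤ 0) (hK₂ : K₂ ≤ 0) : x ^ 2 / 2 * K₁ + y ^ 2 / 2 * K₂ ≤ 0 :=
  add_nonpos (mul_nonpos_of_nonneg_of_nonpos (by positivity) hK₁)
    (mul_nonpos_of_nonneg_of_nonpos (by positivity) hK₂)

end

theorem stmt3_general {S : Type*} (C₁ C₂ : S → ℝ)
    (K₁ K₂ : ℝ) (hK1 : K₁ ≤ 0) (hK2 : K₂ ≤ 0)
    (p : S) (K Kperp M₁ M₂ : ℝ)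
    (hM1 : M₁ = (C₁ p - C₂ p) / 2 * K₁ + (C₁ p + C₂ p) / 2 * K₂)
    (hM2 : M₂ = -((C₁ p - C₂ p) / 2) * K₁ + (C₁ p + C₂ p) / 2 * K₂)
    (h1 : K + Kperp ≤ C₁ p * M₁) (h2 : K - Kperp ≤ C₂ p * M₂) :
    2 * K ≤ (C₁ p - C₂ p) ^ 2 / 2 * K₁ + (C₁ p + C₂ p) ^ 2 / 2 * K₂ ∧
    (C₁ p - C₂ p) ^ 2 / 2 * K₁ + (C₁ p + C₂ p) ^ 2 / 2 * K₂ ≤ 0 ∧ K ≤ 0 := by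
  subst hM1 hM2
  have hsum := mul_add_mul_eq_sq_div_two_mul_add_sq_div_two_mul (C₁ p) (C₂ p) K₁ K₂
  have hnonpos := sq_div_two_mul_add_sq_div_two_mul_nonpos (C₁ p - C₂ p) (C₁ p + C₂ p) hK1 hK2
  exact ⟨by linarith, hnonpos, by linarith⟩

/-- Pointwise inequality in the non-existence proof for minimal 2-spheres in a
product of negatively curved surfaces. -/
theorem stmt3 {S : Type*} (C₁ C₂ : S → ℝ)
    (hC1 : ∀ p, C₁ p ∈ Set.Icc (-1 : ℝ) 1) (hC2 : ∀ p, C₂ p ∈ Set.Icc (-1 : ℝ) 1)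
    (K₁ K₂ : ℝ) (hK1 : K₁ ≤ 0) (hK2 : K₂ ≤ 0)
    (p : S) (K Kperp M₁ M₂ : ℝ)
    (hM1 : M₁ = (C₁ p - C₂ p) / 2 * K₁ + (C₁ p + C₂ p) / 2 * K₂)
    (hM2 : M₂ = -((C₁ p - C₂ p) / 2) * K₁ + (C₁ p + C₂ p) / 2 * K₂)
    (h1 : K + Kperp ≤ C₁ p * M₁) (h2 : K - Kperp ≤ C₂ p * M₂) :
    2 * K ≤ (C₁ p - C₂ p) ^ 2 / 2 * K₁ + (C₁ p + C₂ p) ^ 2 / 2 * K₂ ∧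
    (C₁ p - C₂ p) ^ 2 / 2 * K₁ + (C₁ p + C₂ p) ^ 2 / 2 * K₂ ≤ 0 ∧ K ≤ 0 :=
  stmt3_general C₁ C₂ K₁ K₂ hK1 hK2 p K Kperp M₁ M₂ hM1 hM2 h1 h2
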